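/- The stalactic congruence ≡_stal on (ℕ⁺)* is a pack-good congruence: it is a pack-congruence (for all words u,v, u ≡_stal v ⟺ pack(u) ≡_stal pack(v) and ev(u) = ev(v)) and it is compatible with restriction to alphabet intervals. -/

import Mathlib

open scoped Classical

/-- Words over the positive integers. -/
abbrev Word : Type := List ℕ+

/-- Evaluation of a word: number of occurrences of each letter. -/
def ev (w : Word) : ℕ+ → ℕ := fun a => w.count a

/-- A monoid congruence on the free monoid `(ℕ⁺)*`. -/
def IsCongruence (r : Word → Word → Prop) : Prop :=
  Equivalence r ∧ ∀ u v u' v', r u v → r u' v' → r (u ++ u') (v ++ v')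

/-- Restriction of a word to the letters belonging to a set `I`. -/
noncomputable def restrictTo (I : Set ℕ+) (w : Word) : Word :=
  w.filter fun a => decide (a ∈ I)

/-- `I` is an interval (order-convex subset) of `ℕ⁺`. -/
def IsIntervalSet (I : Set ℕ+) : Prop :=
  ∀ ⦃a b c : ℕ+⦄, a ∈ I → c ∈ I → a ≤ b → b ≤ c → b ∈ I

/-- Compatibility with restriction to alphabet intervals. -/
def CompatRestrict (r : Word → Word → Prop) : Prop :=
  ∀ I : Set ℕ+, IsIntervalSet I → ∀ u v, r u v → r (restrictTo I u) (restrictTo I v)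

/-- `r` is a `φ`-congruence. -/
def IsPhiCongruence (φ : Word → Word) (r : Word → Word → Prop) : Prop :=
  ∀ u v, r u v ↔ (r (φ u) (φ v) ∧ ev u = ev v)

/-- Standardization. -/
def std (w : Word) : Word :=
  (List.range w.length).map fun i =>
    ⟨((List.range w.length).countP fun j =>
        decide (w.getD j 1 < w.getD i 1 ∨ (w.getD j 1 = w.getD i 1 ∧ j < i))) + 1,
      Nat.succ_pos _⟩

/-- Packing. -/
def pack (w : Word) : Word :=
  w.map fun a => ⟨(w.dedup.countP fun b => decide (b < a)) + 1, Nat.succ_pos _⟩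

theorem parkBad_ex (w : Word) :
    ∃ d : ℕ, 1 ≤ d ∧ (w.countP fun a : ℕ+ => decide ((a : ℕ) ≤ d)) < d :=
  ⟨w.length + 1, Nat.succ_le_succ (Nat.zero_le _), by
    have h : (w.countP fun a : ℕ+ => decide ((a : ℕ) ≤ w.length + 1)) ≤ w.length :=
      List.countP_le_length
    omega⟩

/-- The smallest `d ≥ 1` such that fewer than `d` letters of `w` are `≤ d`. -/
noncomputable def parkBad (w : Word) : ℕ := Nat.find (parkBad_ex w)

/-- One pass of the parkization procedure, with fuel. -/
noncomputable def parkAux : ℕ → Word → Word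
  | 0, w => w
  | f + 1, w =>
    if parkBad w ≤ w.length then
      parkAux f (w.map fun a : ℕ+ => if parkBad w < (a : ℕ) then (a - 1 : ℕ+) else a)
    else w

/-- Parkization. The fuel `(sum of the letters)` always suffices,
since every pass strictly decreases the sum of the letters. -/
noncomputable def park (w : Word) : Word := parkAux (w.map fun a => (a : ℕ)).sum w

/-- Smallest monoid congruence containing `base`. -/
def CongClosure (base : Word → Word → Prop) (u v : Word) : Prop :=
  ∀ r : Word → Word → Prop, IsCongruence r → (∀ x y, base x y → r x y) → r u v

def sylvBase (x y : Word) : Prop :=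
  ∃ (a b c : ℕ+) (v : Word), a ≤ b ∧ b < c ∧
    x = a :: c :: (v ++ [b]) ∧ y = c :: a :: (v ++ [b])

/-- The sylvester congruence. -/
def sylv : Word → Word → Prop := CongClosure sylvBase

def stalBase (x y : Word) : Prop :=
  ∃ (a b : ℕ+) (v : Word), x = b :: a :: (v ++ [b]) ∧ y = a :: b :: (v ++ [b])

/-- The stalactic congruence. -/
def stal : Word → Word → Prop := CongClosure stalBase

def sylvSharpBase (x y : Word) : Prop :=
  ∃ (a b c : ℕ+) (v : Word), a < b ∧ b ≤ c ∧
    x = b :: (v ++ [a, c]) ∧ y = b :: (v ++ [c, a])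

/-- The #-sylvester congruence. -/
def sylvSharp : Word → Word → Prop := CongClosure sylvSharpBase

/-- The taïga congruence: join of the sylvester and stalactic congruences. -/
def taiga : Word → Word → Prop := CongClosure fun u v => sylv u v ∨ stal u v

/-- Planar binary trees with letter labels. -/
inductive BT : Type where
  | leaf : BT
  | node : BT → ℕ+ → BT → BT
deriving DecidableEq

/-- Binary search tree insertion of a letter. -/
def BT.insert : BT → ℕ+ → BT
  | .leaf, l => .node .leaf l .leaf
  | .node L b R, l => if l ≤ b then .node (L.insert l) b R else .node L b (R.insert l)

/-- Binary search tree of a word: insert the letters from right to left. -/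
def bst (w : Word) : BT := w.foldr (fun l t => t.insert l) .leaf

/-- Planar binary trees labelled by a letter and a multiplicity. -/
inductive BSTM : Type where
  | leaf : BSTM
  | node : BSTM → ℕ+ → ℕ+ → BSTM → BSTM   -- left, letter, multiplicity, right
deriving DecidableEq

/-- Insertion of a letter into a binary search tree with multiplicities. -/
def BSTM.insert : BSTM → ℕ+ → BSTM
  | .leaf, l => .node .leaf l 1 .leaf
  | .node L l' k R, l =>
    if l = l' then .node L l' (k + 1) R
    else if l < l' then .node (L.insert l) l' k R
    else .node L l' k (R.insert l)

/-- The `P`-symbol: insert the letters of `w` from right to left. -/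
def Pmap (w : Word) : BSTM := w.foldr (fun l t => t.insert l) .leaf

/-- Letters of a BSTM in left-to-right (infix) order. -/
def BSTM.letters : BSTM → List ℕ+
  | .leaf => []
  | .node L l _ R => L.letters ++ l :: R.letters

/-- The binary search tree property for a BSTM. -/
def BSTM.IsSearchTree : BSTM → Prop
  | .leaf => True
  | .node L l _ R =>
      (∀ x ∈ L.letters, x < l) ∧ (∀ x ∈ R.letters, l < x) ∧
        L.IsSearchTree ∧ R.IsSearchTree

/-- Total multiplicity of a letter in a BSTM. -/
def BSTM.mult : BSTM → ℕ+ → ℕ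
  | .leaf, _ => 0
  | .node L l k R, a => L.mult a + (if a = l then (k : ℕ) else 0) + R.mult a

/-- Size of a BSTM: sum of the multiplicities. -/
def BSTM.size : BSTM → ℕ
  | .leaf => 0
  | .node L _ k R => L.size + (k : ℕ) + R.size

/-- Planar binary trees with multiplicities. -/
inductive BTM : Type where
  | leaf : BTM
  | node : BTM → ℕ+ → BTM → BTM
deriving DecidableEq

/-- Size of a BTM: sum of the multiplicities. -/
def BTM.size : BTM → ℕ
  | .leaf => 0
  | .node L k R => L.size + (k : ℕ) + R.size

/-- Number of nodes of a BTM. -/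
def BTM.numNodes : BTM → ℕ
  | .leaf => 0
  | .node L _ R => L.numNodes + 1 + R.numNodes

/-- Forgetting the letters of a BSTM gives a BTM. -/
def forgetLetters : BSTM → BTM
  | .leaf => .leaf
  | .node L _ k R => .node (forgetLetters L) k (forgetLetters R)

/-- The `B`-symbol: the BTM underlying `P(w)`. -/
def Bmap (w : Word) : BTM := forgetLetters (Pmap w)

/-- A packed word: its set of letters is `{1, …, k}` for some `k`. -/
def IsPacked (w : Word) : Prop := ∀ a ∈ w, ∀ b : ℕ+, b ≤ a → b ∈ w

/-- Number of packed words inserting to the BTM `T`. -/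
noncomputable def fT (T : BTM) : ℕ :=
  Set.ncard {w : Word | IsPacked w ∧ Bmap w = T}

/-- The hook-type product over the subtrees of a BTM. -/
def hookProd : BTM → ℕ
  | .leaf => 1
  | .node L k R =>
      (BTM.node L k R).size * ((k : ℕ) - 1).factorial * hookProd L * hookProd R

/-- Label the nodes of a BTM in infix order starting from a given letter;
returns the labelled tree and the next unused letter. -/
def infixLabelAux : BTM → ℕ+ → BSTM × ℕ+
  | .leaf, n => (.leaf, n)
  | .node L k R, n =>
    let p := infixLabelAux L n
    let q := infixLabelAux R (p.2 + 1)
    (.node p.1 p.2 k q.1, q.2)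

/-- Label the nodes of a BTM by `1, …, k` in infix order. -/
def infixLabel (T : BTM) : BSTM := (infixLabelAux T 1).1

/-!
A stalactic class is determined by the evaluation of its words together with the order of the
last occurrences of their letters, which is `List.dedup` (it keeps the rightmost copy of each
letter). Both are invariant under `ba·v·b ≡ ab·v·b`. Conversely, repeated use of the relation
moves an occurrence of a letter `x` rightwards until it meets the next occurrence of `x`, so every
word is congruent to its `blockForm`: the letters in order of last occurrence, each written as one
block of all its copies. Restriction to a set of letters commutes with `dedup`, and packing renames
letters by a map that depends only on the evaluation and is strictly monotone on the letters
present, hence injective, so neither loses information about the invariant.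
-/

namespace List

variable {α β : Type*}

theorem injOn_map {f : α → β} {s : Set α} (hf : Set.InjOn f s) :
    Set.InjOn (map f) {l | ∀ a ∈ l, a ∈ s} := by
  intro l₁ h₁ l₂ h₂ h
  induction l₁ generalizing l₂ with
  | nil => exact (map_eq_nil_iff.1 h.symm).symm
  | cons a l ih =>
    obtain ⟨b, l', rfl, hfb, hl⟩ := map_eq_cons_iff.1 h.symm
    have hal := forall_mem_cons.1 h₁
    have hbl := forall_mem_cons.1 h₂
    rw [hf hal.1 hbl.1 hfb.symm, ih hal.2 hbl.2 hl.symm]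

variable [DecidableEq α]

theorem dedup_dedup_append (l₁ l₂ : List α) :
    (l₁.dedup ++ l₂).dedup = (l₁ ++ l₂).dedup := by
  induction l₁ with
  | nil => rfl
  | cons a l ih =>
    by_cases ha : a ∈ l
    · rw [dedup_cons_of_mem ha, ih, cons_append, dedup_cons_of_mem (mem_append_left l₂ ha)]
    · rw [dedup_cons_of_notMem ha, cons_append, cons_append, dedup_cons, dedup_cons, ih]
      simp only [mem_append, mem_dedup]

theorem dedup_append_dedup (l₁ l₂ : List α) :
    (l₁ ++ l₂.dedup).dedup = (l₁ ++ l₂).dedup := by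
  rw [dedup_append, dedup_append, dedup_idem]

theorem dedup_filter (p : α → Bool) (l : List α) : (l.filter p).dedup = l.dedup.filter p := by
  induction l with
  | nil => rfl
  | cons a l ih =>
    by_cases ha : a ∈ l <;> by_cases hpa : p a <;>
      simp [hpa, ha, ih, dedup_cons_of_mem, dedup_cons_of_notMem]

theorem dedup_map_of_injOn [DecidableEq β] {f : α → β} {l : List α}
    (hf : Set.InjOn f {a | a ∈ l}) : (l.map f).dedup = l.dedup.map f := by
  induction l with
  | nil => rfl
  | cons a l ih =>
    have hf' : Set.InjOn f {b | b ∈ l} := hf.mono fun b hb => mem_cons_of_mem a hb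
    have hmem : f a ∈ l.map f ↔ a ∈ l := by
      refine ⟨fun h => ?_, mem_map_of_mem⟩
      obtain ⟨b, hb, hfb⟩ := mem_map.1 h
      rwa [← hf (mem_cons_of_mem a hb) mem_cons_self hfb]
    by_cases ha : a ∈ l
    · rw [map_cons, dedup_cons_of_mem (hmem.2 ha), dedup_cons_of_mem ha, ih hf']
    · rw [map_cons, dedup_cons_of_notMem (mt hmem.1 ha), dedup_cons_of_notMem ha, ih hf',
        map_cons]

end List

theorem IsCongruence.append_left {r : Word → Word → Prop} (hr : IsCongruence r) (p : Word)
    {u v : Word} (h : r u v) : r (p ++ u) (p ++ v) :=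
  hr.2 _ _ _ _ (hr.1.refl p) h

theorem IsCongruence.append_right {r : Word → Word → Prop} (hr : IsCongruence r) (q : Word)
    {u v : Word} (h : r u v) : r (u ++ q) (v ++ q) :=
  hr.2 _ _ _ _ h (hr.1.refl q)

namespace CongClosure

variable {base : Word → Word → Prop}

theorem isCongruence : IsCongruence (CongClosure base) :=
  ⟨⟨fun u _ hr _ => hr.1.refl u, fun h r hr hb => hr.1.symm (h r hr hb),
    fun h h' r hr hb => hr.1.trans (h r hr hb) (h' r hr hb)⟩,
   fun _ _ _ _ h h' r hr hb => hr.2 _ _ _ _ (h r hr hb) (h' r hr hb)⟩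

theorem of_base {u v : Word} (h : base u v) : CongClosure base u v :=
  fun _ _ hb => hb u v h

end CongClosure

theorem isCongruence_stal : IsCongruence stal := CongClosure.isCongruence

theorem ev_eq_iff_perm {u v : Word} : ev u = ev v ↔ u.Perm v :=
  funext_iff.trans List.perm_iff_count.symm

theorem isCongruence_perm_and_dedup_eq :
    IsCongruence fun u v : Word => u.Perm v ∧ u.dedup = v.dedup := by
  refine ⟨⟨fun u => ⟨.refl u, rfl⟩, fun h => ⟨h.1.symm, h.2.symm⟩,
    fun h h' => ⟨h.1.trans h'.1, h.2.trans h'.2⟩⟩, ?_⟩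
  rintro u v u' v' ⟨hp, hd⟩ ⟨hp', hd'⟩
  refine ⟨hp.append hp', ?_⟩
  rw [← List.dedup_dedup_append, ← List.dedup_append_dedup, hd, hd',
    List.dedup_append_dedup, List.dedup_dedup_append]

theorem perm_and_dedup_eq_of_stalBase {u v : Word} (h : stalBase u v) :
    u.Perm v ∧ u.dedup = v.dedup := by
  obtain ⟨a, b, w, rfl, rfl⟩ := h
  refine ⟨.swap a b _, ?_⟩
  have hb : b ∈ w ++ [b] := by simp
  by_cases ha : a ∈ w ++ [b]
  · simp [ha, hb]
  · have hab : a ≠ b := by rintro rfl; exact ha hb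
    simp [ha, hab]

theorem stal_cons_append_cons (x : ℕ+) (p q : Word) :
    stal (x :: (p ++ x :: q)) (p ++ x :: x :: q) := by
  induction p with
  | nil => exact isCongruence_stal.1.refl _
  | cons c p ih =>
    have hswap : stal (x :: c :: (p ++ [x]) ++ q) (c :: x :: (p ++ [x]) ++ q) :=
      isCongruence_stal.append_right q (CongClosure.of_base ⟨c, x, p, rfl, rfl⟩)
    have hmove := isCongruence_stal.append_left [c] ih
    simp only [List.cons_append, List.append_assoc, List.nil_append] at hswap hmove ⊢
    exact isCongruence_stal.1.trans hswap hmove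

def blockForm (w : Word) : Word := w.dedup.flatMap fun a => List.replicate (w.count a) a

theorem flatMap_replicate_count_cons {x : ℕ+} {w L : Word} (hx : x ∉ L) :
    (L.flatMap fun a => List.replicate ((x :: w).count a) a) =
      L.flatMap fun a => List.replicate (w.count a) a :=
  List.flatMap_congr fun a ha => by rw [List.count_cons_of_ne (ne_of_mem_of_not_mem ha hx).symm]

theorem blockForm_cons_of_notMem {x : ℕ+} {w : Word} (hx : x ∉ w) :
    blockForm (x :: w) = x :: blockForm w := by
  rw [blockForm, List.dedup_cons_of_notMem hx, List.flatMap_cons,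
    flatMap_replicate_count_cons (mt List.mem_dedup.1 hx), List.count_cons_self,
    List.count_eq_zero_of_not_mem hx]
  rfl

theorem blockForm_cons_of_mem {x : ℕ+} {w : Word} (hx : x ∈ w) :
    ∃ p q, blockForm w = p ++ x :: q ∧ blockForm (x :: w) = p ++ x :: x :: q := by
  obtain ⟨A, B, hAB⟩ := List.append_of_mem (List.mem_dedup.2 hx)
  have hnd := List.nodup_dedup w
  rw [hAB, List.nodup_append, List.nodup_cons] at hnd
  have hxA : x ∉ A := fun h => hnd.2.2 x h x List.mem_cons_self rfl
  obtain ⟨k, hk⟩ : ∃ k, w.count x = k + 1 := Nat.exists_eq_add_one.2 (List.count_pos_iff.2 hx)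
  refine ⟨A.flatMap fun a => List.replicate (w.count a) a,
    List.replicate k x ++ B.flatMap fun a => List.replicate (w.count a) a, ?_, ?_⟩
  · rw [blockForm, hAB, List.flatMap_append, List.flatMap_cons, hk, List.replicate_succ]
    rfl
  · rw [blockForm, List.dedup_cons_of_mem hx, hAB, List.flatMap_append, List.flatMap_cons,
      flatMap_replicate_count_cons hxA, flatMap_replicate_count_cons hnd.2.1.1,
      List.count_cons_self, hk, List.replicate_succ, List.replicate_succ]
    rfl

theorem stal_blockForm (w : Word) : stal w (blockForm w) := by
  induction w with
  | nil => exact isCongruence_stal.1.refl _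
  | cons x w ih =>
    refine isCongruence_stal.1.trans (isCongruence_stal.append_left [x] ih) ?_
    by_cases hx : x ∈ w
    · obtain ⟨p, q, hw, hxw⟩ := blockForm_cons_of_mem hx
      rw [hw, hxw]
      exact stal_cons_append_cons x p q
    · rw [blockForm_cons_of_notMem hx]
      exact isCongruence_stal.1.refl _

theorem stal_iff_perm_and_dedup_eq {u v : Word} : stal u v ↔ u.Perm v ∧ u.dedup = v.dedup := by
  refine ⟨fun h => h _ isCongruence_perm_and_dedup_eq fun _ _ => perm_and_dedup_eq_of_stalBase,
    fun ⟨hp, hd⟩ => ?_⟩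
  have hblock : blockForm u = blockForm v := by
    simp only [blockForm, hd, hp.count_eq]
  exact isCongruence_stal.1.trans (stal_blockForm u)
    (hblock ▸ isCongruence_stal.1.symm (stal_blockForm v))

theorem stal_restrictTo (I : Set ℕ+) {u v : Word} (h : stal u v) :
    stal (restrictTo I u) (restrictTo I v) := by
  obtain ⟨hp, hd⟩ := stal_iff_perm_and_dedup_eq.1 h
  exact stal_iff_perm_and_dedup_eq.2 ⟨hp.filter _, by
    rw [restrictTo, restrictTo, List.dedup_filter, List.dedup_filter, hd]⟩

def packRank (w : Word) (a : ℕ+) : ℕ+ :=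
  ⟨(w.dedup.countP fun b => decide (b < a)) + 1, Nat.succ_pos _⟩

theorem pack_eq_map_packRank (w : Word) : pack w = w.map (packRank w) := rfl

theorem packRank_congr {u v : Word} (h : u.Perm v) : packRank u = packRank v := by
  funext a
  exact PNat.eq (by simp only [packRank, PNat.mk_coe, h.dedup.countP_eq])

theorem strictMonoOn_packRank (w : Word) : StrictMonoOn (packRank w) {a | a ∈ w} := by
  intro a ha a' _ haa'
  obtain ⟨s, t, hst⟩ := List.append_of_mem (List.mem_dedup.2 ha)
  have hmono (l : Word) :
      (l.countP fun b => decide (b < a)) ≤ l.countP fun b => decide (b < a') :=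
    List.countP_mono_left fun b _ hb => by simpa using (of_decide_eq_true hb).trans haa'
  rw [← PNat.coe_lt_coe, packRank, packRank, PNat.mk_coe, PNat.mk_coe, hst, List.countP_append,
    List.countP_append, List.countP_cons, List.countP_cons]
  simp only [lt_irrefl, haa', decide_false, decide_true, Bool.false_eq_true, ite_false, ite_true]
  have := hmono s
  have := hmono t
  omega

theorem stal_map_iff {f : ℕ+ → ℕ+} {u v : Word} (hf : Set.InjOn f {a | a ∈ u})
    (hp : u.Perm v) : stal (u.map f) (v.map f) ↔ stal u v := by
  have hfv : Set.InjOn f {a | a ∈ v} := by simpa only [hp.mem_iff] using hf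
  rw [stal_iff_perm_and_dedup_eq, stal_iff_perm_and_dedup_eq, List.dedup_map_of_injOn hf,
    List.dedup_map_of_injOn hfv]
  refine ⟨fun ⟨_, hd⟩ => ⟨hp, List.injOn_map hf (fun a ha => List.mem_dedup.1 ha)
    (fun a ha => hp.mem_iff.2 (List.mem_dedup.1 ha)) hd⟩, fun ⟨_, hd⟩ => ⟨hp.map f, congrArg _ hd⟩⟩

theorem stal_pack_iff {u v : Word} (hp : u.Perm v) : stal (pack u) (pack v) ↔ stal u v := by
  rw [pack_eq_map_packRank, pack_eq_map_packRank, ← packRank_congr hp]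
  exact stal_map_iff (strictMonoOn_packRank u).injOn hp

theorem isPhiCongruence_pack_stal : IsPhiCongruence pack stal := by
  intro u v
  rw [ev_eq_iff_perm]
  refine ⟨fun h => ?_, fun ⟨h, hp⟩ => (stal_pack_iff hp).1 h⟩
  have hp := (stal_iff_perm_and_dedup_eq.1 h).1
  exact ⟨(stal_pack_iff hp).2 h, hp⟩

theorem stal_is_packGood :
    IsCongruence stal ∧ IsPhiCongruence pack stal ∧ CompatRestrict stal :=
  ⟨isCongruence_stal, isPhiCongruence_pack_stal, fun I _ _ _ => stal_restrictTo I⟩
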